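/- Assume that for every x ∈ ℝ³ the map u ↦ f(x,u)/u³ is nondecreasing on (0,∞) and nonincreasing on (−∞,0). Then, with 𝓕(x,u) := u f(x,u) − 4F(x,u), one has 𝓕(x,u) ≥ 𝓕(x,τu) for all (x,u) ∈ ℝ³ × ℝ and all τ ∈ [0,1]; in other words f satisfies condition (f4) with θ = 1. -/

import Mathlib

/-!
If `g u / u ^ p` is nondecreasing on `(0, ∞)`, then on `[a, b] ⊆ [0, ∞)` we have
`g s ≤ C s ^ p` with `C = g b / b ^ p`, hence `(p + 1) ∫ₐᵇ g ≤ C (b ^ (p+1) - a ^ (p+1))` and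
`a g a ≤ C a ^ (p+1)`, while `b g b = C b ^ (p+1)`; together these say that
`u g u - (p + 1) ∫₀ᵘ g` is nondecreasing on `[0, ∞)`. For odd `p` the substitution
`u ↦ -u`, `g ↦ -g (-·)` turns the hypothesis on `(-∞, 0)` into the one on `(0, ∞)`.
-/

open MeasureTheory Filter Topology

noncomputable section

/-- Euclidean space `ℝ³`. -/
abbrev R3 : Type := EuclideanSpace ℝ (Fin 3)

/-- `F(x,u) = ∫₀ᵘ f(x,η) dη`. -/
def Fprim (f : R3 → ℝ → ℝ) (x : R3) (u : ℝ) : ℝ := ∫ η in (0:ℝ)..u, f x η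

open Set intervalIntegral

lemma mul_eq_div_pow_mul_pow_succ (y b : ℝ) (p : ℕ) : b * y = y / b ^ p * b ^ (p + 1) := by
  rcases eq_or_ne b 0 with rfl | hb
  · simp
  · field_simp
    ring

section
variable {g : ℝ → ℝ} {p : ℕ} {a b : ℝ}

lemma le_div_pow_mul_pow_of_monotoneOn (hg : MonotoneOn (fun u => g u / u ^ p) (Ioi 0))
    {s : ℝ} (hs : 0 < s) (hsb : s ≤ b) : g s ≤ g b / b ^ p * s ^ p :=
  (div_le_iff₀ (pow_pos hs p)).mp (hg hs (hs.trans_le hsb) hsb)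

lemma mul_le_div_pow_mul_pow_succ_of_monotoneOn (hg : MonotoneOn (fun u => g u / u ^ p) (Ioi 0))
    (ha : 0 ≤ a) (hab : a ≤ b) : a * g a ≤ g b / b ^ p * a ^ (p + 1) := by
  rcases ha.eq_or_lt with rfl | ha
  · simp
  · calc a * g a ≤ a * (g b / b ^ p * a ^ p) :=
          mul_le_mul_of_nonneg_left (le_div_pow_mul_pow_of_monotoneOn hg ha hab) ha.le
      _ = g b / b ^ p * a ^ (p + 1) := by ring

lemma integral_le_div_pow_mul_of_monotoneOn (hgc : Continuous g)
    (hg : MonotoneOn (fun u => g u / u ^ p) (Ioi 0)) (ha : 0 ≤ a) (hab : a ≤ b) :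
    ((p : ℝ) + 1) * ∫ s in a..b, g s ≤ g b / b ^ p * (b ^ (p + 1) - a ^ (p + 1)) := by
  have hbound : ∫ s in a..b, g s ≤ ∫ s in a..b, g b / b ^ p * s ^ p :=
    integral_mono_on_of_le_Ioo hab (hgc.intervalIntegrable a b)
      ((continuous_const.mul (continuous_pow p)).intervalIntegrable a b)
      fun s hs => le_div_pow_mul_pow_of_monotoneOn hg (ha.trans_lt hs.1) hs.2.le
  rw [intervalIntegral.integral_const_mul, integral_pow] at hbound
  have hp : (0 : ℝ) < p + 1 := by positivity
  calc ((p : ℝ) + 1) * ∫ s in a..b, g s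
      ≤ (p + 1) * (g b / b ^ p * ((b ^ (p + 1) - a ^ (p + 1)) / (p + 1))) :=
        mul_le_mul_of_nonneg_left hbound hp.le
    _ = g b / b ^ p * (b ^ (p + 1) - a ^ (p + 1)) := by field_simp

theorem mul_sub_integral_le_of_monotoneOn (hgc : Continuous g)
    (hg : MonotoneOn (fun u => g u / u ^ p) (Ioi 0)) (ha : 0 ≤ a) (hab : a ≤ b) :
    a * g a - (p + 1) * ∫ η in 0..a, g η ≤ b * g b - (p + 1) * ∫ η in 0..b, g η := by
  have hsplit : (∫ η in 0..b, g η) - ∫ η in 0..a, g η = ∫ η in a..b, g η :=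
    integral_interval_sub_left (hgc.intervalIntegrable 0 b) (hgc.intervalIntegrable 0 a)
  have hint := integral_le_div_pow_mul_of_monotoneOn hgc hg ha hab
  have hleft := mul_le_div_pow_mul_pow_succ_of_monotoneOn hg ha hab
  rw [mul_eq_div_pow_mul_pow_succ (g b) b p]
  linear_combination hint + hleft + ((p : ℝ) + 1) * hsplit

theorem mul_sub_integral_le_of_antitoneOn (hgc : Continuous g) (hp : Odd p)
    (hg : AntitoneOn (fun u => g u / u ^ p) (Iio 0)) (hb : b ≤ 0) (hab : a ≤ b) :
    b * g b - (p + 1) * ∫ η in 0..b, g η ≤ a * g a - (p + 1) * ∫ η in 0..a, g η := by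
  have hreflect : ∀ c, (-c) * (-g c) - (p + 1) * (∫ η in 0..(-c), -g (-η))
      = c * g c - (p + 1) * ∫ η in 0..c, g η := by
    intro c
    rw [intervalIntegral.integral_neg, integral_comp_neg, neg_zero, neg_neg, integral_symm 0 c]
    ring
  have hmono : MonotoneOn (fun u => -g (-u) / u ^ p) (Ioi 0) := by
    intro u hu v hv huv
    have := hg (neg_lt_zero.mpr hv : -v < 0) (neg_lt_zero.mpr hu : -u < 0) (neg_le_neg huv)
    simp only [hp.neg_pow, div_neg, neg_div] at this ⊢
    exact this
  have key := mul_sub_integral_le_of_monotoneOn (by fun_prop) hmono (neg_nonneg.mpr hb)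
    (neg_le_neg hab)
  rwa [neg_neg, neg_neg, hreflect, hreflect] at key

end

/-- (f4') implies (f4) with `θ = 1`: with `𝓕(x,u) = u f(x,u) − 4F(x,u)`,
one has `𝓕(x,τu) ≤ 𝓕(x,u)` for all `τ ∈ [0,1]`. -/
theorem f4'_implies_f4
    (f : R3 → ℝ → ℝ) (hf : Continuous (fun p : R3 × ℝ => f p.1 p.2))
    (hmono_pos : ∀ x : R3, ∀ u v : ℝ, 0 < u → u ≤ v → f x u / u^3 ≤ f x v / v^3)
    (hmono_neg : ∀ x : R3, ∀ u v : ℝ, u ≤ v → v < 0 → f x v / v^3 ≤ f x u / u^3) :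
    ∀ (x : R3) (u : ℝ), ∀ τ ∈ Set.Icc (0:ℝ) 1,
      (τ*u) * f x (τ*u) - 4 * Fprim f x (τ*u) ≤ u * f x u - 4 * Fprim f x u := by
  intro x u τ ⟨hτ0, hτ1⟩
  have hcont : Continuous (f x) := hf.comp (Continuous.prodMk_right x)
  have hfour : ((3 : ℕ) : ℝ) + 1 = 4 := by norm_num
  rcases le_total 0 u with hu | hu
  · have := mul_sub_integral_le_of_monotoneOn (p := 3) hcont
      (fun u hu v _ huv => hmono_pos x u v hu huv) (mul_nonneg hτ0 hu)
      (mul_le_of_le_one_left hu hτ1)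
    rwa [hfour] at this
  · have := mul_sub_integral_le_of_antitoneOn (p := 3) hcont (by decide)
      (fun u _ v hv huv => hmono_neg x u v huv hv) (mul_nonpos_of_nonneg_of_nonpos hτ0 hu)
      (by nlinarith)
    rwa [hfour] at this
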